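/- arXiv:2112.12646 — 2 statements merged into one kernel-verified Lean document; each statement's English description precedes it below -/
import Mathlib

section
/- A function h ∈ F(S¹) is an extreme point of F(S¹) — i.e., h is not the midpoint (f+g)/2 of any two distinct functions f, g ∈ F(S¹) — if and only if for almost every x ∈ [0,π] (with respect to Lebesgue measure), h is differentiable at x with |h′(x)| = 1. -/
open MeasureTheory

/-- `F(S¹)`: 1-Lipschitz functions on `[0,π]` with `f 0 + f π = π` (represented by
functions `ℝ → ℝ`, with all conditions imposed on `[0,π]`). -/
def FS1 : Set (ℝ → ℝ) :=
  {f | LipschitzOnWith 1 f (Set.Icc 0 Real.pi) ∧ f 0 + f Real.pi = Real.pi}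

/-!
A 1-Lipschitz `f` on `[a, b]` is absolutely continuous, so `f y - f x = ∫_x^y f'`, and `|f'| ≤ 1`
a.e.

If `|h'| = 1` a.e. and `h = (f + g) / 2` with `f, g ∈ F(S¹)`, then `f' = g'` a.e., since `±1` are
extreme points of `[-1, 1]`; so `f - g` is constant, and `f 0 + f π = g 0 + g π` makes it `0`.

If `|h'| < 1` on a set of positive measure, the deficit `D x = ∫_0^x (1 - |h'|)` is continuous,
nondecreasing and `D π > 0`. The tent `w = min D (D π - D)` vanishes at `0` and `π` but not
everywhere, and `|w y - w x| ≤ D y - D x`, which is exactly the room `h` leaves in its Lipschitz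
bound on `[x, y]`. Hence `h ± w ∈ F(S¹)`, and `h` is their midpoint.
-/

open Set intervalIntegral

lemma ae_mem_Ioo_of_mem_Icc (a b : ℝ) : ∀ᵐ x, x ∈ Icc a b → x ∈ Ioo a b := by
  filter_upwards [(Ioo_ae_eq_Icc (μ := volume) (a := a) (b := b)).mem_iff] with x hx using hx.2

lemma eq_of_abs_le_one_of_abs_add_div_two_eq_one {a b : ℝ} (ha : |a| ≤ 1) (hb : |b| ≤ 1)
    (hab : |(a + b) / 2| = 1) : a = b := by
  rw [abs_le] at ha hb
  rcases (abs_eq zero_le_one).mp hab with h | h <;> linarith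

lemma lipschitzOnWith_one_of_abs_sub_le {f : ℝ → ℝ} {s : Set ℝ}
    (h : ∀ x ∈ s, ∀ y ∈ s, x ≤ y → |f y - f x| ≤ y - x) : LipschitzOnWith 1 f s := by
  refine .of_dist_le_mul fun x hx y hy => ?_
  simp only [Real.dist_eq, NNReal.coe_one, one_mul]
  rcases le_total x y with hxy | hyx
  · rw [abs_sub_comm, abs_sub_comm x, abs_of_nonneg (sub_nonneg.2 hxy)]
    exact h x hx y hy hxy
  · rw [abs_of_nonneg (sub_nonneg.2 hyx)]
    exact h y hy x hx hyx

noncomputable def lipschitzDeficit (f : ℝ → ℝ) (a x : ℝ) : ℝ := ∫ t in a..x, (1 - |deriv f t|)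

namespace LipschitzOnWith

variable {f : ℝ → ℝ} {K : NNReal} {a b x y : ℝ}

lemma absolutelyContinuousOnInterval_of_le (hf : LipschitzOnWith K f (Icc a b)) (hab : a ≤ b) :
    AbsolutelyContinuousOnInterval f a b :=
  LipschitzOnWith.absolutelyContinuousOnInterval (by rwa [uIcc_of_le hab])

lemma ae_abs_deriv_le (hf : LipschitzOnWith K f (Icc a b)) :
    ∀ᵐ x, x ∈ Icc a b → |deriv f x| ≤ K := by
  filter_upwards [ae_mem_Ioo_of_mem_Icc a b] with x hx hxI
  exact norm_deriv_le_of_lipschitzOn (Icc_mem_nhds (hx hxI).1 (hx hxI).2) hf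

lemma abs_sub_le_integral_abs_deriv (hf : LipschitzOnWith K f (Icc a b)) (hab : a ≤ b) :
    |f b - f a| ≤ ∫ x in a..b, |deriv f x| := by
  rw [← (hf.absolutelyContinuousOnInterval_of_le hab).integral_deriv_eq_sub]
  exact abs_integral_le_integral_abs hab

lemma integral_abs_deriv_le (hf : LipschitzOnWith K f (Icc a b)) (hab : a ≤ b) :
    ∫ x in a..b, |deriv f x| ≤ (b - a) * K := by
  have hbound : ∀ᵐ x, x ∈ Ioc a b → ‖|deriv f x|‖ ≤ K := by
    filter_upwards [hf.ae_abs_deriv_le] with x hx hxI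
    simpa using hx (Ioc_subset_Icc_self hxI)
  simpa using
    (le_abs_self _).trans (norm_integral_le_of_norm_le hab hbound intervalIntegrable_const)

lemma intervalIntegrable_abs_deriv (hf : LipschitzOnWith K f (Icc a b))
    (hx : x ∈ Icc a b) (hy : y ∈ Icc a b) :
    IntervalIntegrable (fun t => |deriv f t|) volume x y := by
  have hab := hx.1.trans hx.2
  refine (hf.absolutelyContinuousOnInterval_of_le hab).intervalIntegrable_deriv.abs.mono_set ?_
  rw [uIcc_of_le hab]
  exact uIcc_subset_Icc hx hy

lemma lipschitzDeficit_sub_lipschitzDeficit (hf : LipschitzOnWith 1 f (Icc a b))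
    (hx : x ∈ Icc a b) (hy : y ∈ Icc a b) :
    lipschitzDeficit f a y - lipschitzDeficit f a x = (y - x) - ∫ t in x..y, |deriv f t| := by
  have ha : a ∈ Icc a b := left_mem_Icc.2 (hx.1.trans hx.2)
  have hint {u v} (hu : u ∈ Icc a b) (hv : v ∈ Icc a b) :=
    (intervalIntegrable_const (c := (1 : ℝ))).sub (hf.intervalIntegrable_abs_deriv hu hv)
  rw [lipschitzDeficit, lipschitzDeficit, integral_interval_sub_left (hint ha hy) (hint ha hx),
    integral_sub intervalIntegrable_const (hf.intervalIntegrable_abs_deriv hx hy)]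
  simp

lemma lipschitzDeficit_mono (hf : LipschitzOnWith 1 f (Icc a b)) (hx : x ∈ Icc a b)
    (hy : y ∈ Icc a b) (hxy : x ≤ y) : lipschitzDeficit f a x ≤ lipschitzDeficit f a y := by
  have := (hf.mono (Icc_subset_Icc hx.1 hy.2)).integral_abs_deriv_le hxy
  rw [NNReal.coe_one, mul_one] at this
  linarith [hf.lipschitzDeficit_sub_lipschitzDeficit hx hy]

lemma abs_sub_add_lipschitzDeficit_sub_le (hf : LipschitzOnWith 1 f (Icc a b))
    (hx : x ∈ Icc a b) (hy : y ∈ Icc a b) (hxy : x ≤ y) :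
    |f y - f x| + (lipschitzDeficit f a y - lipschitzDeficit f a x) ≤ y - x := by
  have := (hf.mono (Icc_subset_Icc hx.1 hy.2)).abs_sub_le_integral_abs_deriv hxy
  linarith [hf.lipschitzDeficit_sub_lipschitzDeficit hx hy]

lemma continuousOn_lipschitzDeficit (hf : LipschitzOnWith 1 f (Icc a b)) (hab : a ≤ b) :
    ContinuousOn (lipschitzDeficit f a) (Icc a b) := by
  have := continuousOn_primitive_interval' ((intervalIntegrable_const (c := (1 : ℝ))).sub
    (hf.intervalIntegrable_abs_deriv (left_mem_Icc.2 hab) (right_mem_Icc.2 hab))) left_mem_uIcc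
  rwa [uIcc_of_le hab] at this

lemma lipschitzOnWith_add_of_abs_sub_le_lipschitzDeficit (hf : LipschitzOnWith 1 f (Icc a b))
    {w : ℝ → ℝ} (hw : ∀ x ∈ Icc a b, ∀ y ∈ Icc a b, x ≤ y →
      |w y - w x| ≤ lipschitzDeficit f a y - lipschitzDeficit f a x) :
    LipschitzOnWith 1 (f + w) (Icc a b) := by
  refine lipschitzOnWith_one_of_abs_sub_le fun x hx y hy hxy => ?_
  calc |(f + w) y - (f + w) x| = |(f y - f x) + (w y - w x)| := by
        rw [Pi.add_apply, Pi.add_apply, add_sub_add_comm]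
    _ ≤ |f y - f x| + |w y - w x| := abs_add_le _ _
    _ ≤ y - x := by linarith [hw x hx y hy hxy, hf.abs_sub_add_lipschitzDeficit_sub_le hx hy hxy]

lemma exists_lipschitzOnWith_add_sub_of_integral_abs_deriv_lt (hf : LipschitzOnWith 1 f (Icc a b))
    (hab : a ≤ b) (hlt : ∫ x in a..b, |deriv f x| < b - a) :
    ∃ w : ℝ → ℝ, w a = 0 ∧ w b = 0 ∧ (∃ c ∈ Icc a b, w c ≠ 0) ∧
      LipschitzOnWith 1 (f + w) (Icc a b) ∧ LipschitzOnWith 1 (f - w) (Icc a b) := by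
  set D := lipschitzDeficit f a
  have ha : a ∈ Icc a b := left_mem_Icc.2 hab
  have hb : b ∈ Icc a b := right_mem_Icc.2 hab
  have hDa : D a = 0 := integral_same
  have hDb : 0 < D b := by linarith [hf.lipschitzDeficit_sub_lipschitzDeficit ha hb]
  set w : ℝ → ℝ := fun x => min (D x) (D b - D x)
  have hw : ∀ x ∈ Icc a b, ∀ y ∈ Icc a b, x ≤ y → |w y - w x| ≤ D y - D x := by
    intro x hx y hy hxy
    refine (abs_min_sub_min_le_max _ _ _ _).trans_eq ?_
    rw [sub_sub_sub_cancel_left, abs_sub_comm (D x),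
      abs_of_nonneg (sub_nonneg.2 (hf.lipschitzDeficit_mono hx hy hxy)), max_self]
  obtain ⟨c, hc, hDc⟩ : D b / 2 ∈ D '' Icc a b :=
    intermediate_value_Icc hab (hf.continuousOn_lipschitzDeficit hab) ⟨by linarith, by linarith⟩
  refine ⟨w, by simp [w, hDa, hDb.le], by simp [w, hDb.le], ⟨c, hc, ?_⟩,
    hf.lipschitzOnWith_add_of_abs_sub_le_lipschitzDeficit hw,
    hf.lipschitzOnWith_add_of_abs_sub_le_lipschitzDeficit (w := -w) ?_⟩
  · simp only [w, hDc, sub_half, min_self]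
    positivity
  · intro x hx y hy hxy
    simpa only [Pi.neg_apply, neg_sub_neg, abs_sub_comm] using hw x hx y hy hxy

lemma ae_abs_deriv_eq_one_of_integral_abs_deriv_eq (hf : LipschitzOnWith 1 f (Icc a b))
    (hab : a ≤ b) (heq : ∫ x in a..b, |deriv f x| = b - a) :
    ∀ᵐ x, x ∈ Icc a b → |deriv f x| = 1 := by
  have ha : a ∈ Icc a b := left_mem_Icc.2 hab
  have hb : b ∈ Icc a b := right_mem_Icc.2 hab
  have hzero : ∫ t in a..b, (1 - |deriv f t|) = 0 := by
    have := hf.lipschitzDeficit_sub_lipschitzDeficit ha hb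
    rwa [heq, sub_self, lipschitzDeficit, lipschitzDeficit, integral_same, sub_zero] at this
  have hnonneg : 0 ≤ᵐ[volume.restrict (Ioc a b)] fun t => 1 - |deriv f t| := by
    refine (ae_restrict_iff' measurableSet_Ioc).2 ?_
    filter_upwards [hf.ae_abs_deriv_le] with x hx hxI
    simpa using hx (Ioc_subset_Icc_self hxI)
  rw [integral_eq_zero_iff_of_le_of_nonneg_ae hab hnonneg
    (intervalIntegrable_const.sub (hf.intervalIntegrable_abs_deriv ha hb)),
    Filter.EventuallyEq, ae_restrict_iff' measurableSet_Ioc] at hzero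
  filter_upwards [hzero, ae_mem_Ioo_of_mem_Icc a b] with x hx hIoo hxI
  have := hx (Ioo_subset_Ioc_self (hIoo hxI))
  rw [Pi.zero_apply, sub_eq_zero] at this
  exact this.symm

lemma ae_exists_hasDerivWithinAt_iff (hf : LipschitzOnWith K f (Icc a b))
    (hab : a ≤ b) :
    (∀ᵐ x, x ∈ Icc a b → ∃ d, HasDerivWithinAt f d (Icc a b) x ∧ |d| = 1) ↔
      ∀ᵐ x, x ∈ Icc a b → |deriv f x| = 1 := by
  constructor
  · intro h
    filter_upwards [h, ae_mem_Ioo_of_mem_Icc a b] with x hd hIoo hx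
    obtain ⟨d, hd, hd1⟩ := hd hx
    rwa [(hd.hasDerivAt (Icc_mem_nhds (hIoo hx).1 (hIoo hx).2)).deriv]
  · intro h
    filter_upwards [h, (hf.absolutelyContinuousOnInterval_of_le hab).ae_differentiableAt]
      with x h1 hdiff hx
    exact ⟨deriv f x, (hdiff (by rwa [uIcc_of_le hab])).hasDerivAt.hasDerivWithinAt, h1 hx⟩

lemma exists_sub_eq_const_of_abs_deriv_midpoint_eq_one {g h : ℝ → ℝ}
    (hf : LipschitzOnWith 1 f (Icc a b)) (hg : LipschitzOnWith 1 g (Icc a b)) (hab : a ≤ b)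
    (hmid : ∀ x ∈ Icc a b, h x = (f x + g x) / 2) (hh : ∀ᵐ x, x ∈ Icc a b → |deriv h x| = 1) :
    ∃ C, ∀ x ∈ Icc a b, f x - g x = C := by
  rw [← uIcc_of_le hab]
  refine ((hf.sub hg).absolutelyContinuousOnInterval_of_le hab).const_of_ae_hasDerivAt_zero ?_
  filter_upwards [hh, ae_mem_Ioo_of_mem_Icc a b,
    (hf.absolutelyContinuousOnInterval_of_le hab).ae_differentiableAt,
    (hg.absolutelyContinuousOnInterval_of_le hab).ae_differentiableAt] with x hx hIoo hfd hgd hxu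
  have hxI : x ∈ Icc a b := by rwa [uIcc_of_le hab] at hxu
  have hnhds : Icc a b ∈ nhds x := Icc_mem_nhds (hIoo hxI).1 (hIoo hxI).2
  have hf' := (hfd hxu).hasDerivAt
  have hg' := (hgd hxu).hasDerivAt
  have hh' : HasDerivAt h ((deriv f x + deriv g x) / 2) x :=
    ((hf'.add hg').div_const 2).congr_of_eventuallyEq (Filter.eventually_of_mem hnhds hmid)
  have hfg : deriv f x = deriv g x :=
    eq_of_abs_le_one_of_abs_add_div_two_eq_one
      (by simpa using norm_deriv_le_of_lipschitzOn hnhds hf)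
      (by simpa using norm_deriv_le_of_lipschitzOn hnhds hg) (hh'.deriv ▸ hx hxI)
  simpa [hfg] using HasDerivAt.fun_sub hf' hg'

end LipschitzOnWith

/-- A function `h ∈ F(S¹)` is an extreme point of `F(S¹)` (it is not the midpoint of two
distinct elements of `F(S¹)`) if and only if, for almost every `x ∈ [0,π]`,
`h` is differentiable at `x` with `|h'(x)| = 1`. -/
theorem extremePoint_FS1_iff (h : ℝ → ℝ) (hh : h ∈ FS1) :
    (∀ f ∈ FS1, ∀ g ∈ FS1,
      (∀ x ∈ Set.Icc (0 : ℝ) Real.pi, h x = (f x + g x) / 2) →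
      ∀ x ∈ Set.Icc (0 : ℝ) Real.pi, f x = g x) ↔
    (∀ᵐ x ∂volume, x ∈ Set.Icc (0 : ℝ) Real.pi →
      ∃ d : ℝ, HasDerivWithinAt h d (Set.Icc (0 : ℝ) Real.pi) x ∧ |d| = 1) := by
  obtain ⟨hlip, hsum⟩ := hh
  have hπ := Real.pi_pos.le
  rw [hlip.ae_exists_hasDerivWithinAt_iff hπ]
  constructor
  · intro hext
    refine hlip.ae_abs_deriv_eq_one_of_integral_abs_deriv_eq hπ
      (le_antisymm (by simpa using hlip.integral_abs_deriv_le hπ) ?_)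
    by_contra! hlt
    obtain ⟨w, hw0, hwπ, ⟨c, hc, hwc⟩, hadd, hsub⟩ :=
      hlip.exists_lipschitzOnWith_add_sub_of_integral_abs_deriv_lt hπ hlt
    have := hext (h + w) ⟨hadd, by simp [hw0, hwπ, hsum]⟩ (h - w) ⟨hsub, by simp [hw0, hwπ, hsum]⟩
      (fun x _ => by simp only [Pi.add_apply, Pi.sub_apply]; ring) c hc
    simp only [Pi.add_apply, Pi.sub_apply] at this
    exact hwc (by linarith)
  · rintro hae f ⟨hf, hfsum⟩ g ⟨hg, hgsum⟩ hmid x hx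
    obtain ⟨C, hC⟩ := hf.exists_sub_eq_const_of_abs_deriv_midpoint_eq_one hg hπ hmid hae
    linarith [hC 0 (left_mem_Icc.2 hπ), hC Real.pi (right_mem_Icc.2 hπ), hC x hx]
end

section
/- Let n ≥ 2. There exists a point p ∈ ℝ^{n+1} with Euclidean norm ‖p‖₂ > 1 that is Sⁿ_∞-surrounding (so the closed Euclidean unit ball D^{n+1}_∞ is properly contained in F(Sⁿ_∞)). Consequently, D^{n+1}_∞ with the ℓ∞ metric is not hyperconvex. -/
private lemma sum3 (N : ℕ) (hN : 3 ≤ N) (f : ℕ → ℝ) (hf : ∀ j, 3 ≤ j → f j = 0) :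
    ∑ j ∈ Finset.range N, f j = f 0 + f 1 + f 2 := by
  rw [Finset.range_eq_Ico, ← Finset.sum_Ico_consecutive f (by norm_num : 0 ≤ 3) hN]
  have h2 : ∑ j ∈ Finset.Ico 3 N, f j = 0 :=
    Finset.sum_eq_zero fun j hj => hf j (Finset.mem_Ico.mp hj).1
  rw [h2, add_zero, ← Finset.range_eq_Ico]
  simp [Finset.sum_range_succ]

private lemma dist_eq_of {m : ℕ} (x p : Fin m → ℝ) (i : Fin m) (r : ℝ) (hr : 0 ≤ r)
    (h : ∀ k, |x k - p k| ≤ r) (hi : |x i - p i| = r) : dist x p = r := by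
  refine le_antisymm ((dist_pi_le_iff hr).2 fun k => by rw [Real.dist_eq]; exact h k) ?_
  calc r = dist (x i) (p i) := by rw [Real.dist_eq, hi]
    _ ≤ dist x p := dist_le_pi_dist x p i


/-- `p` is an `X`-surrounding point in `ℝᵐ_∞` (here `Fin m → ℝ` carries the `ℓ∞` metric):
for every coordinate `i` and sign `ξ ∈ {±1}`, the cone `p + ξΛ_i` meets `X`. -/
def Surrounds {m : ℕ} (X : Set (Fin m → ℝ)) (p : Fin m → ℝ) : Prop :=
  ∀ i : Fin m, ∀ ξ : ℝ, ξ = 1 ∨ ξ = -1 → ∃ x ∈ X, ξ * (x i - p i) = dist x p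

/-- A metric space `E` is hyperconvex if every family of closed balls whose radii satisfy
the pairwise triangle condition has a common point. -/
def Hyperconvex (E : Type*) [MetricSpace E] : Prop :=
  ∀ (I : Type) (x : I → E) (r : I → ℝ), (∀ i, 0 ≤ r i) →
    (∀ i j, dist (x i) (x j) ≤ r i + r j) → ∃ c : E, ∀ i, dist (x i) c ≤ r i

private lemma surrounding_exists (n : ℕ) (hn : 2 ≤ n) :
    ∃ p : Fin (n + 1) → ℝ, 1 < Real.sqrt (∑ i, p i ^ 2) ∧
      Surrounds {x : Fin (n + 1) → ℝ | Real.sqrt (∑ i, x i ^ 2) = 1} p := by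
  have h3 : 3 ≤ n + 1 := by omega
  set q : ℕ → ℝ := fun j => if j < 3 then 3/5 else 0 with hq
  refine ⟨fun k => q k.val, ?_, ?_⟩
  · have hsum : ∑ k : Fin (n+1), q k.val ^ 2 = 27/25 := by
      rw [Fin.sum_univ_eq_sum_range (fun j => q j ^ 2) (n+1),
        sum3 (n+1) h3 _ (fun j hj => by simp [hq, Nat.not_lt.mpr hj])]
      norm_num [hq]
    rw [hsum]
    rw [show (1:ℝ) = Real.sqrt 1 by rw [Real.sqrt_one]]
    exact Real.sqrt_lt_sqrt (by norm_num) (by norm_num)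
  · intro i ξ hξ
    rcases hξ with hξ | hξ
    · -- ξ = 1
      by_cases hi : (i : ℕ) < 3
      · -- x = 7/9 at i, 4/9 at other two small coords, 0 else
        set xq : ℕ → ℝ := fun j => if j = i.val then 7/9 else if j < 3 then 4/9 else 0 with hxq
        refine ⟨fun k => xq k.val, ?_, ?_⟩
        · show Real.sqrt _ = 1
          have hsum : ∑ k : Fin (n+1), xq k.val ^ 2 = 1 := by
            rw [Fin.sum_univ_eq_sum_range (fun j => xq j ^ 2) (n+1),
              sum3 (n+1) h3 _ (fun j hj => by
                have h1 : ¬ j < 3 := by omega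
                have h2 : j ≠ i.val := by omega
                simp [hxq, h1, h2])]
            have : i.val = 0 ∨ i.val = 1 ∨ i.val = 2 := by omega
            rcases this with h | h | h <;> norm_num [hxq, h]
          rw [hsum, Real.sqrt_one]
        · have hxi : xq i.val = 7/9 := by simp [hxq]
          have hpi : q i.val = 3/5 := by simp [hq, hi]
          have hd : dist (fun k : Fin (n+1) => xq k.val) (fun k => q k.val) = 8/45 := by
            refine dist_eq_of _ _ i _ (by norm_num) (fun k => ?_) ?_
            · by_cases hk : k.val = i.val
              · rw [show xq k.val = 7/9 by simp [hxq, hk],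
                  show q k.val = 3/5 by simp [hq, hk ▸ hi]]
                rw [abs_le]; constructor <;> norm_num
              · by_cases hk3 : k.val < 3
                · rw [show xq k.val = 4/9 by simp [hxq, hk, hk3],
                    show q k.val = 3/5 by simp [hq, hk3]]
                  rw [abs_le]; constructor <;> norm_num
                · rw [show xq k.val = 0 by simp [hxq, hk, hk3],
                    show q k.val = 0 by simp [hq, hk3]]
                  norm_num
            · rw [hxi, hpi, abs_of_pos (by norm_num : (0:ℝ) < 7/9 - 3/5)]
              norm_num
          rw [hd, hξ]
          show 1 * (xq i.val - q i.val) = 8/45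
          rw [hxi, hpi]; norm_num
      · -- x = e_i
        set xq : ℕ → ℝ := fun j => if j = i.val then 1 else 0 with hxq
        refine ⟨fun k => xq k.val, ?_, ?_⟩
        · show Real.sqrt _ = 1
          have hsum : ∑ k : Fin (n+1), xq k.val ^ 2 = 1 := by
            have : ∀ k : Fin (n+1), xq k.val ^ 2 = if k = i then 1 else 0 := by
              intro k
              by_cases hk : k = i
              · simp [hxq, hk]
              · simp [hxq, Fin.val_inj, hk]
            rw [Finset.sum_congr rfl fun k _ => this k]
            simp
          rw [hsum, Real.sqrt_one]
        · have hxi : xq i.val = 1 := by simp [hxq]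
          have hpi : q i.val = 0 := by simp [hq, hi]
          have hd : dist (fun k : Fin (n+1) => xq k.val) (fun k => q k.val) = 1 := by
            refine dist_eq_of _ _ i _ (by norm_num) (fun k => ?_) ?_
            · by_cases hk : k.val = i.val
              · have hq0 : q k.val = 0 := by
                  have h' : ¬ k.val < 3 := by omega
                  simp [hq, h']
                rw [show xq k.val = 1 by simp [hxq, hk], hq0]
                norm_num
              · by_cases hk3 : k.val < 3
                · rw [show xq k.val = 0 by simp [hxq, hk],
                    show q k.val = 3/5 by simp [hq, hk3]]
                  rw [abs_le]; constructor <;> norm_num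
                · rw [show xq k.val = 0 by simp [hxq, hk],
                    show q k.val = 0 by simp [hq, hk3]]
                  norm_num
            · rw [hxi, hpi]; norm_num
          rw [hd, hξ]
          show 1 * (xq i.val - q i.val) = 1
          rw [hxi, hpi]; norm_num
    · -- ξ = -1, x = -e_i
      set xq : ℕ → ℝ := fun j => if j = i.val then -1 else 0 with hxq
      have hpi_nonneg : 0 ≤ q i.val := by by_cases h : i.val < 3 <;> simp [hq, h] <;> norm_num
      have hpi_le : q i.val ≤ 3/5 := by by_cases h : i.val < 3 <;> simp [hq, h] <;> norm_num
      refine ⟨fun k => xq k.val, ?_, ?_⟩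
      · show Real.sqrt _ = 1
        have hsum : ∑ k : Fin (n+1), xq k.val ^ 2 = 1 := by
          have : ∀ k : Fin (n+1), xq k.val ^ 2 = if k = i then 1 else 0 := by
            intro k
            by_cases hk : k = i
            · simp [hxq, hk]
            · simp [hxq, Fin.val_inj, hk]
          rw [Finset.sum_congr rfl fun k _ => this k]
          simp
        rw [hsum, Real.sqrt_one]
      · have hxi : xq i.val = -1 := by simp [hxq]
        have hd : dist (fun k : Fin (n+1) => xq k.val) (fun k => q k.val) = 1 + q i.val := by
          refine dist_eq_of _ _ i _ (by linarith) (fun k => ?_) ?_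
          · by_cases hk : k.val = i.val
            · rw [show xq k.val = -1 by simp [hxq, hk], show q k.val = q i.val by rw [hk]]
              rw [abs_le]; constructor <;> linarith
            · have hq_bound : 0 ≤ q k.val ∧ q k.val ≤ 3/5 := by
                by_cases h : k.val < 3 <;> simp [hq, h] <;> norm_num
              rw [show xq k.val = 0 by simp [hxq, hk]]
              rw [abs_le]; constructor <;> [linarith [hq_bound.2]; linarith [hq_bound.1]]
          · rw [hxi, abs_of_neg (by linarith : (-1 : ℝ) - q i.val < 0)]; ring
        rw [hd, hξ]
        show -1 * (xq i.val - q i.val) = 1 + q i.val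
        rw [hxi]; ring

private lemma not_hc (n : ℕ)
    (key : ∃ p : Fin (n + 1) → ℝ, 1 < Real.sqrt (∑ i, p i ^ 2) ∧
      Surrounds {x : Fin (n + 1) → ℝ | Real.sqrt (∑ i, x i ^ 2) = 1} p) :
    ¬ Hyperconvex ↥{x : Fin (n + 1) → ℝ | Real.sqrt (∑ i, x i ^ 2) ≤ 1} := by
  obtain ⟨p, hp, hs⟩ := key
  intro H
  set S : Set (Fin (n+1) → ℝ) := {x | Real.sqrt (∑ i, x i ^ 2) = 1} with hS
  obtain ⟨c, hc⟩ := H ↥S (fun x => ⟨x.1, le_of_eq x.2⟩) (fun x => dist x.1 p)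
    (fun x => dist_nonneg)
    (fun a b => by
      rw [Subtype.dist_eq]
      exact dist_triangle_right a.1 b.1 p)
  -- c.1 ≠ p
  have hcp : c.1 ≠ p := by
    intro h
    have hc2 : Real.sqrt (∑ i, c.1 i ^ 2) ≤ 1 := c.2
    rw [h] at hc2
    linarith
  obtain ⟨i, hi⟩ : ∃ i, c.1 i ≠ p i := by
    by_contra h
    push_neg at h
    exact hcp (funext h)
  set ξ : ℝ := if c.1 i < p i then 1 else -1 with hξdef
  have hξ : ξ = 1 ∨ ξ = -1 := by
    by_cases h : c.1 i < p i <;> simp [hξdef, h]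
  obtain ⟨x, hxS, hx⟩ := hs i ξ hξ
  have h1 : dist x c.1 ≤ dist x p := by
    have := hc ⟨x, hxS⟩
    rwa [Subtype.dist_eq] at this
  have h2 : dist (x i) (c.1 i) ≤ dist x c.1 := dist_le_pi_dist x c.1 i
  have h3 : ξ * (x i - c.1 i) ≤ |x i - c.1 i| := by
    rcases hξ with h | h
    · rw [h, one_mul]; exact le_abs_self _
    · rw [h]; rw [neg_one_mul]; exact neg_le_abs _
  have h5 : 0 < ξ * (p i - c.1 i) := by
    by_cases h : c.1 i < p i
    · rw [hξdef, if_pos h]; nlinarith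
    · rw [hξdef, if_neg h]
      have : p i < c.1 i := lt_of_le_of_ne (not_lt.mp h) (Ne.symm hi)
      nlinarith
  have heq : ξ * (x i - c.1 i) = ξ * (x i - p i) + ξ * (p i - c.1 i) := by ring
  rw [Real.dist_eq] at h2
  linarith [hx ▸ (heq ▸ (h3.trans (h2.trans h1)))]

/-- For `n ≥ 2` there is a point of Euclidean norm `> 1` that is `Sⁿ_∞`-surrounding
(so `D^{n+1}_∞ ⊊ F(Sⁿ_∞)`); consequently, the closed unit ball `D^{n+1}_∞` with the
`ℓ∞` metric is not hyperconvex. -/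
theorem ball_not_hyperconvex (n : ℕ) (hn : 2 ≤ n) :
    (∃ p : Fin (n + 1) → ℝ, 1 < Real.sqrt (∑ i, p i ^ 2) ∧
      Surrounds {x : Fin (n + 1) → ℝ | Real.sqrt (∑ i, x i ^ 2) = 1} p) ∧
    ¬ Hyperconvex ↥{x : Fin (n + 1) → ℝ | Real.sqrt (∑ i, x i ^ 2) ≤ 1} :=
  ⟨surrounding_exists n hn, not_hc n (surrounding_exists n hn)⟩
end
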